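/- arXiv:1804.01258 — 4 statements merged into one kernel-verified Lean document; each statement's English description precedes it below -/
import Mathlib

section
/- Every finite simple graph G on n ≥ 3 vertices with minimum degree at least n/2 is Hamiltonian. -/
open SimpleGraph

/-- A set of vertices is independent if no two of its vertices are adjacent. -/
def SimpleGraph.IsIndepSet' {V : Type*} (G : SimpleGraph V) (s : Set V) : Prop :=
  s.Pairwise fun u v => ¬ G.Adj u v

/-- The independence number `α(G)`: the maximum size of an independent set. -/
noncomputable def SimpleGraph.indepNum' {V : Type*} (G : SimpleGraph V) [Fintype V] : ℕ :=
  sSup {n | ∃ s : Finset V, G.IsIndepSet' ↑s ∧ s.card = n}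

/-- `G` is `k`-connected: `G` has more than `k` vertices and deleting any set of
fewer than `k` vertices leaves a connected graph. -/
def SimpleGraph.IsKConnected {V : Type*} (G : SimpleGraph V) [Fintype V] (k : ℕ) : Prop :=
  k < Fintype.card V ∧ ∀ s : Set V, s.ncard < k → (G.induce sᶜ).Connected

/-- The connectivity `κ(G)`: the largest `k` such that `G` is `k`-connected. -/
noncomputable def SimpleGraph.connectivity' {V : Type*} (G : SimpleGraph V) [Fintype V] : ℕ :=
  sSup {k | G.IsKConnected k}

/-- `σ_k(G)`: the minimum degree sum over independent sets of size `k`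
(`⊤` if there is no such set). -/
noncomputable def SimpleGraph.sigmaDeg {V : Type*} (G : SimpleGraph V) [Fintype V]
    (k : ℕ) : ℕ∞ := by
  classical
  exact ⨅ s ∈ {s : Finset V | G.IsIndepSet' ↑s ∧ s.card = k}, (∑ x ∈ s, G.degree x : ℕ∞)

/-!
Take a longest path `u = x₀, …, x_{k-1} = v` (a path is a duplicate-free `G.Adj`-chain of
vertices, a cycle a `Cycle.Chain`). By maximality every neighbour of `u` and of `v` lies on the path, and since
`deg u + deg v ≥ n ≥ k` there is an `i` with `v ~ xᵢ` and `u ~ xᵢ₊₁`; then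
`u … xᵢ v … xᵢ₊₁ u` is a cycle through all `k` vertices of the path. If a vertex `x` is off this
cycle, `deg x + deg u ≥ n` forces `x` to have a neighbour on it, and opening the cycle at that
neighbour gives a path of length `k + 1`, a contradiction.
-/

namespace List

variable {α : Type*}

theorem exists_eq_append_cons_cons_of_length_tail_lt {p q : α → Bool} :
    ∀ l : List α, l.tail.length < l.dropLast.countP p + l.tail.countP q →
      ∃ l₁ a b l₂, l = l₁ ++ a :: b :: l₂ ∧ p a ∧ q b
  | [], h | [_], h => by simp at h
  | a :: b :: l, h => by
    by_cases hab : p a ∧ q b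
    · exact ⟨[], a, b, l, rfl, hab⟩
    · obtain ⟨l₁, c, d, l₂, hl, hc, hd⟩ :=
        exists_eq_append_cons_cons_of_length_tail_lt (p := p) (q := q) (b :: l) (by
          simp only [dropLast_cons_cons, tail_cons, countP_cons, length_cons] at h ⊢
          grind)
      exact ⟨a :: l₁, c, d, l₂, by rw [hl, cons_append], hc, hd⟩

end List

namespace SimpleGraph

variable {V : Type*} {G : SimpleGraph V}

theorem degree_le_countP_adj {u : V} [Fintype (G.neighborSet u)] [DecidableRel G.Adj]
    {l : List V} (hl : l.Nodup) (h : ∀ w, G.Adj u w → w ∈ l) :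
    G.degree u ≤ l.countP (G.Adj u ·) := by
  classical
  rw [← card_neighborFinset_eq_degree, List.countP_eq_length_filter,
    ← List.toFinset_card_of_nodup (hl.filter _)]
  exact Finset.card_le_card fun w hw => by
    rw [mem_neighborFinset] at hw
    simp [h w hw, hw]

theorem cycleChain_of_crossing {p q : List V} {a b : V} (hl : (p ++ a :: b :: q).IsChain G.Adj)
    (ha : ∀ v ∈ (b :: q).getLast?, G.Adj a v) (hb : ∀ u ∈ (p ++ [a]).head?, G.Adj b u) :
    Cycle.Chain G.Adj (b :: (p ++ a :: q.reverse) : List V) := by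
  have hsplit : p ++ a :: b :: q = (p ++ [a]) ++ b :: q := by simp
  rw [hsplit] at hl
  rw [Cycle.chain_coe_cons,
    show b :: (p ++ a :: q.reverse ++ [b]) = (b :: (p ++ [a])) ++ (b :: q).reverse by simp]
  refine (List.isChain_cons.2 ⟨hb, hl.left_of_append⟩).append
    (List.isChain_reverse.2 (hl.right_of_append.imp fun _ _ h => h.symm)) ?_
  intro x hx y hy
  rw [← List.cons_append, List.getLast?_concat, Option.mem_some_iff] at hx
  subst hx
  rw [List.head?_reverse] at hy
  exact ha y hy

theorem exists_perm_cycleChain_of_le_degree_add_degree [∀ v, Fintype (G.neighborSet v)]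
    [DecidableRel G.Adj] {l : List V} (hc : l.IsChain G.Adj) (hnd : l.Nodup) (hne : l ≠ [])
    (hu : ∀ w, G.Adj (l.head hne) w → w ∈ l) (hv : ∀ w, G.Adj (l.getLast hne) w → w ∈ l)
    (hdeg : l.length ≤ G.degree (l.head hne) + G.degree (l.getLast hne)) :
    ∃ c : List V, c.Perm l ∧ Cycle.Chain G.Adj (c : Cycle V) := by
  have hdu : G.degree (l.head hne) ≤ l.tail.countP (G.Adj (l.head hne) ·) := by
    refine degree_le_countP_adj ((List.tail_sublist l).nodup hnd) fun w hw => ?_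
    have := hu w hw
    rw [← List.cons_head_tail hne, List.mem_cons] at this
    exact this.resolve_left fun h => G.loopless.irrefl _ (h ▸ hw)
  have hdv : G.degree (l.getLast hne) ≤ l.dropLast.countP (G.Adj (l.getLast hne) ·) := by
    refine degree_le_countP_adj ((List.dropLast_sublist l).nodup hnd) fun w hw => ?_
    have := hv w hw
    rw [← List.dropLast_append_getLast hne, List.mem_append, List.mem_singleton] at this
    exact this.resolve_right fun h => G.loopless.irrefl _ (h ▸ hw)
  obtain ⟨p, a, b, q, hl, hva, hub⟩ := List.exists_eq_append_cons_cons_of_length_tail_lt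
    (p := (G.Adj (l.getLast hne) ·)) (q := (G.Adj (l.head hne) ·)) l
    (by rw [List.length_tail]; have := List.length_pos_of_ne_nil hne; omega)
  refine ⟨b :: (p ++ a :: q.reverse), ?_, cycleChain_of_crossing (hl ▸ hc) ?_ ?_⟩
  · classical
    rw [hl, List.perm_iff_count]
    intro x
    simp only [List.count_cons, List.count_append, List.count_reverse]
    omega
  · have : (b :: q).getLast? = some (l.getLast hne) := by
      rw [← List.getLast?_eq_some_getLast, hl,
        show p ++ a :: b :: q = (p ++ [a]) ++ b :: q by simp,
        List.getLast?_append_of_ne_nil _ (List.cons_ne_nil _ _)]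
    simpa [this, G.adj_comm] using hva
  · have : (p ++ [a]).head? = some (l.head hne) := by
      rw [← List.head?_eq_some_head, hl]; simp
    simpa [this, G.adj_comm] using hub

theorem exists_isChain_nodup_length_succ_of_cycleChain {c : List V}
    (hc : Cycle.Chain G.Adj (c : Cycle V)) (hnd : c.Nodup) {x y : V} (hx : x ∉ c) (hy : y ∈ c)
    (hxy : G.Adj x y) :
    ∃ l : List V, l.IsChain G.Adj ∧ l.Nodup ∧ l.length = c.length + 1 := by
  obtain ⟨s, t, rfl⟩ := List.append_of_mem hy
  have hrot : (y :: (t ++ s)).Perm (s ++ y :: t) := by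
    simpa using List.perm_append_comm (l₁ := y :: t) (l₂ := s)
  rw [Cycle.coe_eq_coe.2 List.isRotated_append, List.cons_append, Cycle.chain_coe_cons,
    ← List.cons_append] at hc
  refine ⟨x :: y :: (t ++ s), List.isChain_cons_cons.2 ⟨hxy, hc.left_of_append⟩,
    List.nodup_cons.2 ⟨fun h => hx (hrot.mem_iff.1 h), hrot.nodup_iff.2 hnd⟩, ?_⟩
  simp [hrot.length_eq]

theorem exists_adj_mem_of_card_le_degree_add_degree [Fintype V] [DecidableRel G.Adj]
    {s : Finset V} {x u : V} (hx : x ∉ s) (hu : u ∈ s) (hN : ∀ w, G.Adj u w → w ∈ s)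
    (hdeg : Fintype.card V ≤ G.degree x + G.degree u) : ∃ y ∈ s, G.Adj x y := by
  classical
  by_contra! hno
  have hdx : G.degree x ≤ (insert x s)ᶜ.card := by
    rw [← card_neighborFinset_eq_degree]
    refine Finset.card_le_card fun w hw => ?_
    rw [mem_neighborFinset] at hw
    simp only [Finset.mem_compl, Finset.mem_insert, not_or]
    exact ⟨(G.ne_of_adj hw).symm, fun h => hno w h hw⟩
  have hdu : G.degree u ≤ (s.erase u).card := by
    rw [← card_neighborFinset_eq_degree]
    refine Finset.card_le_card fun w hw => ?_
    rw [mem_neighborFinset] at hw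
    exact Finset.mem_erase.2 ⟨(G.ne_of_adj hw).symm, hN w hw⟩
  rw [Finset.card_compl, Finset.card_insert_of_notMem hx] at hdx
  rw [Finset.card_erase_of_mem hu] at hdu
  have := s.card_le_univ
  have := Finset.card_pos.2 ⟨u, hu⟩
  omega

theorem isHamiltonian_of_cycleChain [Fintype V] [DecidableEq V] {c : List V}
    (hc : Cycle.Chain G.Adj (c : Cycle V)) (hnd : c.Nodup) (hall : ∀ x, x ∈ c)
    (h3 : 3 ≤ Fintype.card V) : G.IsHamiltonian := by
  have hlen : c.length = Fintype.card V := by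
    rw [← List.toFinset_card_of_nodup hnd, ← Finset.card_univ]
    congr
    ext x
    simp [hall]
  have hne : c ≠ [] := by rintro rfl; simp at hlen; omega
  obtain ⟨hclose, hchain⟩ := List.isChain_cons.1 ((Cycle.chain_ne_nil _ hne).1 hc)
  have hadj : G.Adj (c.getLast hne) (c.head hne) := hclose _ (List.head?_eq_some_head hne)
  intro _
  refine ⟨_, Walk.cons hadj (Walk.ofSupport c hne hchain), ?_⟩
  rw [Walk.isHamiltonianCycle_iff_isCycle_and_length_eq,
    Walk.isCycle_iff_isPath_tail_and_le_length]
  simp only [Walk.getVert_cons_succ, Walk.tail_cons, Walk.isPath_def, Walk.support_copy,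
    Walk.support_ofSupport, hnd, Walk.length_cons, Walk.length_ofSupport, Nat.reduceLeDiff,
    true_and]
  omega

structure IsLongestChain (G : SimpleGraph V) (l : List V) : Prop where
  isChain : l.IsChain G.Adj
  nodup : l.Nodup
  length_le : ∀ l' : List V, l'.IsChain G.Adj → l'.Nodup → l'.length ≤ l.length

theorem exists_isLongestChain [Fintype V] [Nonempty V] (G : SimpleGraph V) :
    ∃ l : List V, l ≠ [] ∧ G.IsLongestChain l := by
  have hfin : {l : List V | l.IsChain G.Adj ∧ l.Nodup}.Finite :=
    (List.finite_length_le V (Fintype.card V)).subset fun l hl => hl.2.length_le_card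
  obtain ⟨l, ⟨hc, hnd⟩, hmax⟩ := Set.exists_max_image _ List.length hfin
    ⟨[Classical.arbitrary V], List.isChain_singleton _, List.nodup_singleton _⟩
  have := hmax [Classical.arbitrary V] ⟨List.isChain_singleton _, List.nodup_singleton _⟩
  exact ⟨l, List.ne_nil_of_length_pos this, hc, hnd, fun l' hc' hnd' => hmax l' ⟨hc', hnd'⟩⟩

namespace IsLongestChain

variable {l : List V}

theorem reverse (hl : G.IsLongestChain l) : G.IsLongestChain l.reverse where
  isChain := List.isChain_reverse.2 (hl.isChain.imp fun _ _ h => h.symm)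
  nodup := List.nodup_reverse.2 hl.nodup
  length_le l' hc hnd := by simpa using hl.length_le l' hc hnd

theorem mem_of_adj_head (hl : G.IsLongestChain l) (hne : l ≠ []) {w : V}
    (hw : G.Adj (l.head hne) w) : w ∈ l := by
  by_contra hwl
  have := hl.length_le (w :: l) (List.isChain_cons.2 ⟨fun u hu => ?_, hl.isChain⟩)
    (List.nodup_cons.2 ⟨hwl, hl.nodup⟩)
  · simp at this
  · rw [List.head?_eq_some_head hne, Option.mem_some_iff] at hu
    exact hu ▸ hw.symm

theorem mem_of_adj_getLast (hl : G.IsLongestChain l) (hne : l ≠ []) {w : V}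
    (hw : G.Adj (l.getLast hne) w) : w ∈ l :=
  List.mem_reverse.1 (hl.reverse.mem_of_adj_head (by simpa using hne) (by simpa using hw))

end IsLongestChain

end SimpleGraph

/-- Dirac's theorem: a graph on `n ≥ 3` vertices with minimum degree at least `n/2`
is Hamiltonian. -/
theorem stmt_1 {V : Type*} [Fintype V] [DecidableEq V] (G : SimpleGraph V) [DecidableRel G.Adj]
    (hn : 3 ≤ Fintype.card V)
    (hdeg : ∀ v : V, Fintype.card V ≤ 2 * G.degree v) :
    G.IsHamiltonian := by
  have : Nonempty V := Fintype.card_pos_iff.1 (by omega)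
  obtain ⟨l, hne, hl⟩ := exists_isLongestChain G
  have hu : ∀ w, G.Adj (l.head hne) w → w ∈ l := fun _ => hl.mem_of_adj_head hne
  obtain ⟨c, hperm, hcyc⟩ := exists_perm_cycleChain_of_le_degree_add_degree hl.isChain hl.nodup
    hne hu (fun _ => hl.mem_of_adj_getLast hne) (by
      have := hl.nodup.length_le_card
      have := hdeg (l.head hne)
      have := hdeg (l.getLast hne)
      omega)
  have hcnd : c.Nodup := hperm.nodup_iff.2 hl.nodup
  by_cases hall : ∀ x, x ∈ l
  · exact isHamiltonian_of_cycleChain hcyc hcnd (fun x => hperm.mem_iff.2 (hall x)) hn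
  obtain ⟨x, hx⟩ := not_forall.1 hall
  obtain ⟨y, hy, hxy⟩ := exists_adj_mem_of_card_le_degree_add_degree (s := l.toFinset)
    (by simpa using hx) (List.mem_toFinset.2 (List.head_mem hne)) (by simpa using hu)
    (by have := hdeg x; have := hdeg (l.head hne); omega)
  obtain ⟨l', hc', hnd', hlen'⟩ := exists_isChain_nodup_length_succ_of_cycleChain hcyc hcnd
    (fun h => hx (hperm.mem_iff.1 h)) (hperm.mem_iff.2 (List.mem_toFinset.1 hy)) hxy
  have := hl.length_le l' hc' hnd'
  rw [hperm.length_eq] at hlen'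
  omega
end

section
/- Let G be a finite simple graph on n ≥ 3 vertices such that every pair of nonadjacent vertices x, y satisfies deg(x) + deg(y) ≥ n. Then G is Hamiltonian. -/
open SimpleGraph

/-!
Let `p` be a longest path, from `a` to `b`; all neighbours of `a` and `b` lie on `p`. If `a ~ b`,
closing `p` gives a cycle. Otherwise `deg a + deg b ≥ n > length p`, so by pigeonhole some edge
`v w` of `p` has `a ~ w` and `v ~ b`, and `a → w ⇝ b → v ⇝ a` is a cycle through the vertices of
`p`. The Ore condition gives any two nonadjacent vertices a common neighbour, so `G` is connected,
and a vertex off the cycle adjacent to it would extend the cycle to a path longer than `p`. Hence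
the cycle is Hamiltonian. For `n ≥ 3` the Ore condition also forces minimum degree `2`, which
makes `p` long enough for the closed walk to be a cycle.
-/
namespace SimpleGraph

open Finset

variable {V : Type*} {G : SimpleGraph V}

namespace Walk

lemma exists_eq_append_cons_of_mem_darts {u v : V} {p : G.Walk u v} {d : G.Dart}
    (hd : d ∈ p.darts) :
    ∃ (q₁ : G.Walk u d.fst) (q₂ : G.Walk d.snd v), p = q₁.append (cons d.adj q₂) := by
  induction p with
  | nil => simp at hd
  | cons h q ih =>
    rcases List.mem_cons.1 hd with rfl | hd
    · exact ⟨nil, q, rfl⟩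
    · obtain ⟨q₁, q₂, rfl⟩ := ih hd
      exact ⟨cons h q₁, q₂, rfl⟩

lemma IsPath.isCycle_cons {u v : V} {p : G.Walk v u} (hp : p.IsPath) (h : G.Adj u v)
    (hlen : 2 ≤ p.length) : (cons h p).IsCycle :=
  isCycle_iff_isPath_tail_and_le_length.2 ⟨by simpa using hp, by simp; omega⟩

lemma IsCycle.exists_isPath_length_eq [DecidableEq V] {u x y : V} {c : G.Walk u u}
    (hc : c.IsCycle) (hy : y ∈ c.support) (hx : x ∉ c.support) (hyx : G.Adj y x) :
    ∃ (v : V) (q : G.Walk v x), q.IsPath ∧ q.length = c.length := by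
  have hc' := hc.rotate hy
  refine ⟨_, (c.rotate y hy).tail.concat hyx, hc'.isPath_tail.concat ?_ hyx, ?_⟩
  · rw [support_tail_of_not_nil _ hc'.not_nil, (support_rotate c y hy).mem_iff]
    exact fun h => hx (List.mem_of_mem_tail h)
  · rw [length_concat, length_tail_add_one hc'.not_nil, length_rotate]

lemma IsCycle.isHamiltonianCycle_of_forall_mem_support [DecidableEq V] {u : V} {c : G.Walk u u}
    (hc : c.IsCycle) (hall : ∀ w, w ∈ c.support) : c.IsHamiltonianCycle := by
  refine ⟨hc, hc.isPath_tail.isHamiltonian_of_mem fun w => ?_⟩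
  rw [support_tail_of_not_nil _ hc.not_nil]
  have hw := hall w
  rw [← c.cons_tail_support, List.mem_cons] at hw
  rcases hw with rfl | h
  · exact c.end_mem_tail_support hc.not_nil
  · exact h

lemma IsPath.exists_isCycle_length_eq {a b : V} {p : G.Walk a b} (hp : p.IsPath)
    (hab : ¬G.Adj a b) {d : G.Dart} (hd : d ∈ p.darts) (had : G.Adj a d.snd)
    (hdb : G.Adj d.fst b) : ∃ c : G.Walk a a, c.IsCycle ∧ c.length = p.length + 1 := by
  obtain ⟨q₁, q₂, rfl⟩ := exists_eq_append_cons_of_mem_darts hd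
  let r : G.Walk d.snd a := q₂.append (cons hdb.symm q₁.reverse)
  have hr : r.IsPath := by
    refine IsPath.mk' (List.Perm.nodup_iff ?_ |>.2 hp.support_nodup)
    simp only [r, support_append, support_cons, support_reverse, List.tail_cons]
    exact List.perm_append_comm.trans ((List.reverse_perm _).append_right _)
  have hq₂ : q₂.length ≠ 0 := fun h => hab (q₂.eq_of_length_eq_zero h ▸ had)
  refine ⟨cons had r, hr.isCycle_cons had ?_, ?_⟩ <;>
  · simp only [r, length_cons, length_append, length_reverse]
    omega

lemma card_toFinset_darts_le [DecidableEq V] {a b : V} (p : G.Walk a b) :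
    #p.darts.toFinset ≤ p.length :=
  p.length_darts ▸ List.toFinset_card_le _

section Counting

variable [Fintype V] [DecidableRel G.Adj]

lemma degree_le_card_filter_darts_snd [DecidableEq V] {a b : V} (p : G.Walk a b)
    (ha : ∀ w, G.Adj a w → w ∈ p.support) :
    G.degree a ≤ #{d ∈ p.darts.toFinset | G.Adj a d.snd} := by
  refine (card_le_card (t := {d ∈ p.darts.toFinset | G.Adj a d.snd}.image (·.snd))
    fun w hw => ?_).trans card_image_le
  rw [mem_neighborFinset] at hw
  have hw' := ha w hw
  rw [← p.cons_tail_support, ← map_snd_darts, List.mem_cons] at hw'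
  obtain ⟨d, hd, rfl⟩ := List.mem_map.1 (hw'.resolve_left (G.ne_of_adj hw).symm)
  exact mem_image_of_mem _ (mem_filter.2 ⟨List.mem_toFinset.2 hd, hw⟩)

lemma degree_le_card_filter_darts_fst [DecidableEq V] {a b : V} (p : G.Walk a b)
    (hb : ∀ w, G.Adj b w → w ∈ p.support) :
    G.degree b ≤ #{d ∈ p.darts.toFinset | G.Adj d.fst b} := by
  refine (card_le_card (t := {d ∈ p.darts.toFinset | G.Adj d.fst b}.image (·.fst))
    fun w hw => ?_).trans card_image_le
  rw [mem_neighborFinset] at hw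
  have hw' := hb w hw
  rw [← map_fst_darts_append, List.mem_append, List.mem_singleton] at hw'
  obtain ⟨d, hd, rfl⟩ := List.mem_map.1 (hw'.resolve_right (G.ne_of_adj hw).symm)
  exact mem_image_of_mem _ (mem_filter.2 ⟨List.mem_toFinset.2 hd, hw.symm⟩)

lemma degree_le_length {a b : V} (p : G.Walk a b) (ha : ∀ w, G.Adj a w → w ∈ p.support) :
    G.degree a ≤ p.length := by
  classical
  exact (p.degree_le_card_filter_darts_snd ha).trans <| (card_filter_le _ _).trans
    p.card_toFinset_darts_le

lemma exists_mem_darts_adj_adj {a b : V} (p : G.Walk a b)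
    (ha : ∀ w, G.Adj a w → w ∈ p.support) (hb : ∀ w, G.Adj b w → w ∈ p.support)
    (hlen : p.length < G.degree a + G.degree b) :
    ∃ d ∈ p.darts, G.Adj a d.snd ∧ G.Adj d.fst b := by
  classical
  obtain ⟨d, hd⟩ := inter_nonempty_of_card_lt_card_add_card (filter_subset _ _)
    (filter_subset _ _) <| p.card_toFinset_darts_le.trans_lt <| hlen.trans_le <|
      add_le_add (p.degree_le_card_filter_darts_snd ha) (p.degree_le_card_filter_darts_fst hb)
  simp only [mem_inter, mem_filter, List.mem_toFinset] at hd
  exact ⟨d, hd.1.1, hd.1.2, hd.2.2⟩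

end Counting

structure IsLongestPath {u v : V} (p : G.Walk u v) : Prop where
  isPath : p.IsPath
  length_le : ∀ ⦃x y : V⦄ (q : G.Walk x y), q.IsPath → q.length ≤ p.length

lemma IsLongestPath.reverse {u v : V} {p : G.Walk u v} (hp : p.IsLongestPath) :
    p.reverse.IsLongestPath :=
  ⟨hp.isPath.reverse, fun _ _ q hq => p.length_reverse ▸ hp.length_le q hq⟩

lemma IsLongestPath.mem_support_of_adj_start {u v w : V} {p : G.Walk u v}
    (hp : p.IsLongestPath) (h : G.Adj u w) : w ∈ p.support := by
  by_contra hw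
  have := hp.length_le (cons h.symm p) ((cons_isPath_iff _ _).2 ⟨hp.isPath, hw⟩)
  simp at this

lemma IsLongestPath.mem_support_of_adj_end {u v w : V} {p : G.Walk u v}
    (hp : p.IsLongestPath) (h : G.Adj v w) : w ∈ p.support := by
  simpa using hp.reverse.mem_support_of_adj_start h

lemma IsLongestPath.forall_mem_support_of_isCycle [DecidableEq V] (hG : G.Preconnected)
    {a b u : V} {p : G.Walk a b} (hp : p.IsLongestPath) {c : G.Walk u u} (hc : c.IsCycle)
    (hlen : c.length = p.length + 1) (w : V) : w ∈ c.support := by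
  by_contra hw
  obtain ⟨d, -, hd, hd'⟩ :=
    (hG u w).some.exists_boundary_dart {x | x ∈ c.support} c.start_mem_support hw
  obtain ⟨_, q, hq, hqlen⟩ := hc.exists_isPath_length_eq hd hd' d.adj
  have := hp.length_le q hq
  omega

end Walk

lemma exists_isLongestPath [Finite V] [Nonempty V] :
    ∃ (a b : V) (p : G.Walk a b), p.IsLongestPath := by
  cases nonempty_fintype V
  classical
  have : Nonempty (Σ x y, G.Path x y) := ⟨⟨Classical.arbitrary V, _, Path.nil⟩⟩
  obtain ⟨⟨a, b, p⟩, hmax⟩ :=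
    Finite.exists_max fun q : Σ x y, G.Path x y => (q.2.2 : G.Walk q.1 q.2.1).length
  exact ⟨a, b, p, ⟨p.2, fun x y q hq => hmax ⟨x, y, q, hq⟩⟩⟩

def IsOre [Fintype V] (G : SimpleGraph V) [DecidableRel G.Adj] : Prop :=
  ∀ x y : V, x ≠ y → ¬G.Adj x y → Fintype.card V ≤ G.degree x + G.degree y

section Ore

variable [Fintype V] [DecidableRel G.Adj]

lemma degree_add_degree_add_two_le [DecidableEq V] {x y : V} (hxy : x ≠ y) (h : ¬G.Adj x y) :
    G.degree x + G.degree y + 2 ≤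
      Fintype.card V + #(G.neighborFinset x ∩ G.neighborFinset y) := by
  have hsub : G.neighborFinset x ∪ G.neighborFinset y ⊆ univ \ {x, y} := by
    intro z hz
    simp only [mem_union, mem_neighborFinset] at hz
    simp only [mem_sdiff, mem_univ, mem_insert, mem_singleton, true_and]
    rintro (rfl | rfl) <;> rcases hz with hz | hz
    exacts [G.irrefl hz, h hz.symm, h hz, G.irrefl hz]
  have hunion := card_le_card hsub
  rw [card_sdiff_of_subset (subset_univ _), card_univ, card_pair hxy] at hunion
  have hpair : #{x, y} ≤ Fintype.card V := card_le_univ _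
  rw [card_pair hxy] at hpair
  have := card_union_add_card_inter (G.neighborFinset x) (G.neighborFinset y)
  simp only [card_neighborFinset_eq_degree] at this
  omega

namespace IsOre

lemma two_le_card_inter_neighborFinset [DecidableEq V] (hG : G.IsOre) {x y : V} (hxy : x ≠ y)
    (h : ¬G.Adj x y) : 2 ≤ #(G.neighborFinset x ∩ G.neighborFinset y) := by
  have := hG x y hxy h
  have := degree_add_degree_add_two_le hxy h
  omega

lemma preconnected (hG : G.IsOre) : G.Preconnected := by
  classical
  intro x y
  by_cases hxy : x = y
  · exact hxy ▸ Reachable.refl x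
  by_cases h : G.Adj x y
  · exact h.reachable
  obtain ⟨z, hz⟩ := card_pos.1 (zero_lt_two.trans_le (hG.two_le_card_inter_neighborFinset hxy h))
  rw [mem_inter, mem_neighborFinset, mem_neighborFinset] at hz
  exact hz.1.reachable.trans hz.2.symm.reachable

lemma two_le_degree (hG : G.IsOre) (hn : 3 ≤ Fintype.card V) (x : V) : 2 ≤ G.degree x := by
  classical
  by_cases h : ∃ y, x ≠ y ∧ ¬G.Adj x y
  · obtain ⟨y, hxy, h⟩ := h
    exact (hG.two_le_card_inter_neighborFinset hxy h).trans (card_le_card inter_subset_left)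
  · push Not at h
    have hsub : univ.erase x ⊆ G.neighborFinset x := fun y hy =>
      (mem_neighborFinset _ _ _).2 (h y (ne_of_mem_erase hy).symm)
    have := card_le_card hsub
    rw [card_erase_of_mem (mem_univ x), card_univ, card_neighborFinset_eq_degree] at this
    omega

lemma exists_isCycle_of_isLongestPath (hG : G.IsOre) (hn : 3 ≤ Fintype.card V) {a b : V}
    {p : G.Walk a b} (hp : p.IsLongestPath) :
    ∃ c : G.Walk a a, c.IsCycle ∧ c.length = p.length + 1 := by
  have hlen : 2 ≤ p.length := (hG.two_le_degree hn a).trans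
    (p.degree_le_length fun _ => hp.mem_support_of_adj_start)
  by_cases hab : G.Adj a b
  · exact ⟨Walk.cons hab p.reverse,
      hp.isPath.reverse.isCycle_cons hab (by simpa using hlen), by simp⟩
  have hne : a ≠ b := by
    rintro rfl
    have := congrArg (fun q : G.Path a a => (q : G.Walk a a).length) (Path.loop_eq ⟨p, hp.isPath⟩)
    simp only [Path.nil_coe, Walk.length_nil] at this
    omega
  obtain ⟨d, hd, had, hdb⟩ := p.exists_mem_darts_adj_adj (fun _ => hp.mem_support_of_adj_start)
    (fun _ => hp.mem_support_of_adj_end) (hp.isPath.length_lt.trans_le (hG a b hne hab))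
  exact hp.isPath.exists_isCycle_length_eq hab hd had hdb

end IsOre

end Ore

end SimpleGraph

/-- Ore's theorem: if every pair of nonadjacent vertices of a graph on `n ≥ 3` vertices
has degree sum at least `n`, the graph is Hamiltonian. -/
theorem stmt_2 {V : Type*} [Fintype V] [DecidableEq V] (G : SimpleGraph V) [DecidableRel G.Adj]
    (hn : 3 ≤ Fintype.card V)
    (hdeg : ∀ x y : V, x ≠ y → ¬ G.Adj x y → Fintype.card V ≤ G.degree x + G.degree y) :
    G.IsHamiltonian := by
  have hG : G.IsOre := hdeg
  have : Nonempty V := Fintype.card_pos_iff.1 (by omega)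
  obtain ⟨a, b, p, hp⟩ := exists_isLongestPath (G := G)
  obtain ⟨c, hc, hlen⟩ := hG.exists_isCycle_of_isLongestPath hn hp
  exact fun _ => ⟨a, c, hc.isHamiltonianCycle_of_forall_mem_support
    (hp.forall_mem_support_of_isCycle hG.preconnected hc hlen)⟩
end

section
/- Let G be a finite simple graph on at least 3 vertices with independence number α(G) at most its connectivity κ(G). Then G is Hamiltonian. -/
open SimpleGraph

namespace CE

variable {V : Type*} {G : SimpleGraph V}

lemma firstDart_mem_darts {u v : V} (p : G.Walk u v) (hp : ¬p.Nil) :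
    p.firstDart hp ∈ p.darts := by
  cases p with
  | nil => simp at hp
  | cons h q =>
    have : (Walk.cons h q).firstDart hp = ⟨(_, _), h⟩ :=
      Dart.ext _ _ (by simp [Walk.firstDart, Walk.getVert_cons_succ, Walk.getVert_zero])
    rw [this, Walk.darts_cons]
    exact List.mem_cons_self

lemma start_mem_tail {r : V} (C : G.Walk r r) (hC : ¬C.Nil) :
    r ∈ C.support.tail := by
  have hd : C.darts ≠ [] := by
    have : 0 < C.darts.length := by
      rw [Walk.length_darts]
      rwa [Walk.not_nil_iff_lt_length] at hC
    exact List.ne_nil_of_length_pos this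
  have h1 : (C.darts.getLast hd).snd = r := by rw [Walk.getLast_darts_eq_lastDart hd]; rfl
  have h2 : (C.darts.getLast hd).snd ∈ C.darts.map (·.snd) :=
    List.mem_map_of_mem (List.getLast_mem hd)
  rw [Walk.map_snd_darts, h1] at h2
  exact h2

lemma closed_mem_support_iff_mem_tail {r : V} (C : G.Walk r r) (hC : ¬C.Nil) {x : V} :
    x ∈ C.support ↔ x ∈ C.support.tail := by
  constructor
  · intro hx
    rw [Walk.support_eq_cons] at hx
    rcases List.mem_cons.mp hx with rfl | hx
    · exact start_mem_tail C hC
    · exact hx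
  · exact fun hx => List.mem_of_mem_tail hx

/-- fst's of darts of a cycle are nodup. -/
lemma cycle_darts_fst_nodup {r : V} {C : G.Walk r r} (hC : C.IsCycle) :
    (C.darts.map (·.fst)).Nodup := by
  have hnn : ¬C.Nil := hC.not_nil
  have htl : C.support.tail.Nodup := hC.support_nodup
  -- support.tail = support.tail.dropLast ++ [r]
  have hd : C.darts ≠ [] := by
    have : 0 < C.darts.length := by
      rw [Walk.length_darts]
      rwa [Walk.not_nil_iff_lt_length] at hnn
    exact List.ne_nil_of_length_pos this
  have h3 : C.support.tail ≠ [] := by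
    intro h
    exact List.not_mem_nil (h ▸ start_mem_tail C hnn)
  -- map fst ++ [r] = support = r :: tail
  have key : C.darts.map (·.fst) ++ [r] = r :: C.support.tail := by
    rw [Walk.map_fst_darts_append]
    exact Walk.support_eq_cons C
  -- tail = tail.dropLast ++ [tail.getLast]
  have h4 : C.support.tail.dropLast ++ [C.support.tail.getLast h3] = C.support.tail :=
    List.dropLast_append_getLast h3
  have h5 : C.support.tail.getLast h3 = r := by
    have h1 : (C.darts.getLast hd).snd = r := by rw [Walk.getLast_darts_eq_lastDart hd]; rfl
    have := Walk.map_snd_darts C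
    calc C.support.tail.getLast h3 = (C.darts.map (·.snd)).getLast (by simp [this, h3]) := by
            congr 1
            exact this.symm
      _ = (C.darts.getLast hd).snd := by rw [List.getLast_map]
      _ = r := h1
  have h6 : r :: C.support.tail = (r :: C.support.tail.dropLast) ++ [r] := by
    nth_rewrite 1 [← h4]
    rw [h5]
    simp
  rw [h6] at key
  have h7 : C.darts.map (·.fst) = r :: C.support.tail.dropLast :=
    List.append_cancel_right key
  rw [h7]
  have h8 : C.support.tail.dropLast.Nodup := htl.sublist (List.dropLast_sublist _)
  have h9 : r ∉ C.support.tail.dropLast := by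
    intro hr
    have := htl
    rw [← h4, h5] at this
    rw [List.nodup_append] at this
    exact this.2.2 _ hr _ (by simp) rfl
  exact List.nodup_cons.mpr ⟨h9, h8⟩

lemma cycle_darts_snd_nodup {r : V} {C : G.Walk r r} (hC : C.IsCycle) :
    (C.darts.map (·.snd)).Nodup := by
  rw [Walk.map_snd_darts]
  exact hC.support_nodup

section csucc
variable [DecidableEq V]

lemma length_rotate {r u : V} (C : G.Walk r r) (hu : u ∈ C.support) :
    (C.rotate _ hu).length = C.length := by
  have h := congrArg Walk.length (C.take_spec hu)
  rw [Walk.length_append] at h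
  rw [Walk.rotate, Walk.length_append]
  omega

/-- The successor of a vertex on a closed walk. -/
abbrev csucc {r : V} (C : G.Walk r r) {u : V} (hu : u ∈ C.support) : V :=
  (C.rotate _ hu).snd

lemma rotate_not_nil {r u : V} {C : G.Walk r r} (hC : ¬C.Nil) (hu : u ∈ C.support) :
    ¬(C.rotate _ hu).Nil := by
  rw [Walk.not_nil_iff_lt_length] at hC ⊢
  rwa [length_rotate]

/-- There is a dart of `C` from `u` to `csucc C hu`. -/
lemma exists_dart_csucc {r u : V} {C : G.Walk r r} (hC : ¬C.Nil) (hu : u ∈ C.support) :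
    ∃ d ∈ C.darts, d.fst = u ∧ d.snd = csucc C hu := by
  have hn := rotate_not_nil hC hu
  refine ⟨(C.rotate _ hu).firstDart hn, ?_, rfl, rfl⟩
  exact (Walk.rotate_darts C _ hu).mem_iff.mp (firstDart_mem_darts _ hn)

lemma adj_csucc {r u : V} {C : G.Walk r r} (hC : ¬C.Nil) (hu : u ∈ C.support) :
    G.Adj u (csucc C hu) := by
  obtain ⟨d, hd, h1, h2⟩ := exists_dart_csucc hC hu
  subst h1
  rw [← h2]
  exact d.adj

lemma csucc_mem_support {r u : V} {C : G.Walk r r} (hC : ¬C.Nil) (hu : u ∈ C.support) :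
    csucc C hu ∈ C.support := by
  obtain ⟨d, hd, h1, h2⟩ := exists_dart_csucc hC hu
  exact h2 ▸ Walk.dart_snd_mem_support_of_mem_darts _ hd

/-- Any dart of a cycle goes from its fst to the successor of its fst. -/
lemma dart_snd_eq_csucc {r : V} {C : G.Walk r r} (hC : C.IsCycle) {d : G.Dart}
    (hd : d ∈ C.darts) : d.snd = csucc C (Walk.dart_fst_mem_support_of_mem_darts _ hd) := by
  obtain ⟨e, he, h1, h2⟩ := exists_dart_csucc hC.not_nil
    (Walk.dart_fst_mem_support_of_mem_darts _ hd)
  have hde : d = e :=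
    List.inj_on_of_nodup_map (cycle_darts_fst_nodup hC) hd he h1.symm
  subst hde
  exact h2

lemma csucc_injective {r u w : V} {C : G.Walk r r} (hC : C.IsCycle)
    (hu : u ∈ C.support) (hw : w ∈ C.support)
    (h : csucc C hu = csucc C hw) : u = w := by
  obtain ⟨d, hd, hd1, hd2⟩ := exists_dart_csucc hC.not_nil hu
  obtain ⟨e, he, he1, he2⟩ := exists_dart_csucc hC.not_nil hw
  have hde : d = e :=
    List.inj_on_of_nodup_map (cycle_darts_snd_nodup hC) hd he (by rw [hd2, he2, h] : d.snd = e.snd)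
  rw [← hd1, ← he1, hde]

/-- An edge of `G` between `x` and `y` is an edge of the cycle `C` only if
`y` is the successor of `x` or `x` is the successor of `y`. -/
lemma edge_mem_cycle_iff {r x y : V} {C : G.Walk r r} (hC : C.IsCycle)
    (hxy : s(x, y) ∈ C.edges) :
    ∃ (hx : x ∈ C.support) (hy : y ∈ C.support),
      y = csucc C hx ∨ x = csucc C hy := by
  rw [Walk.edges, List.mem_map] at hxy
  obtain ⟨d, hd, hde⟩ := hxy
  have hfst := Walk.dart_fst_mem_support_of_mem_darts _ hd
  have hsnd := Walk.dart_snd_mem_support_of_mem_darts _ hd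
  have hsucc := dart_snd_eq_csucc hC hd
  rw [Dart.edge, Sym2.eq_iff] at hde
  rcases hde with ⟨h1, h2⟩ | ⟨h1, h2⟩
  · exact ⟨h1 ▸ hfst, h2 ▸ hsnd, Or.inl (by subst h1 h2; exact hsucc)⟩
  · exact ⟨h2 ▸ hsnd, h1 ▸ hfst, Or.inr (by subst h1 h2; exact hsucc)⟩

end csucc
section surgery
variable [DecidableEq V]

/-- Unrolling a cycle at a vertex: a Hamiltonian-type path of the cycle from the
successor of `u` back to `u`. -/
lemma tail_rotate_spec {r u : V} {C : G.Walk r r} (hC : C.IsCycle) (hu : u ∈ C.support) :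
    ∃ Q : G.Walk (csucc C hu) u, Q.IsPath ∧ Q.length + 1 = C.length ∧
      (∀ x, x ∈ Q.support ↔ x ∈ C.support) ∧ (∀ d ∈ Q.darts, d ∈ C.darts) ∧
      (∀ e ∈ Q.edges, e ∈ C.edges) := by
  have hCuC : (C.rotate _ hu).IsCycle := hC.rotate hu
  have hCun : ¬(C.rotate _ hu).Nil := hCuC.not_nil
  refine ⟨(C.rotate _ hu).tail, ?_, ?_, ?_, ?_, ?_⟩
  · exact Walk.IsPath.mk' (by
      rw [Walk.support_tail_of_not_nil _ hCun]
      exact hCuC.support_nodup)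
  · rw [Walk.length_tail_add_one hCun, length_rotate]
  · intro x
    rw [Walk.support_tail_of_not_nil _ hCun,
      (Walk.support_rotate C _ hu).mem_iff, ← closed_mem_support_iff_mem_tail C hC.not_nil]
  · intro d hd
    have h1 : d ∈ (C.rotate _ hu).darts := by
      have := Walk.cons_tail_eq (C.rotate _ hu) hCun
      rw [← this, Walk.darts_cons]
      exact List.mem_cons_of_mem _ hd
    exact (Walk.rotate_darts C _ hu).mem_iff.mp h1
  · intro e he
    rw [Walk.edges_eq_map_darts, List.mem_map] at he
    obtain ⟨d, hd, rfl⟩ := he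
    have h1 : d ∈ (C.rotate _ hu).darts := by
      have := Walk.cons_tail_eq (C.rotate _ hu) hCun
      rw [← this, Walk.darts_cons]
      exact List.mem_cons_of_mem _ hd
    have h2 : d.edge ∈ (C.rotate _ hu).edges := List.mem_map_of_mem h1
    exact (Walk.rotate_edges C _ hu).mem_iff.mp h2

end surgery
section surgery1
variable [DecidableEq V]

/-- Surgery 1: if `u` lies on cycle `C` and there is a path `P` from `a` to `b` disjoint
from `C` with `u ~ a` and `b ~ succ u`, then there is a longer cycle. -/
lemma surgery1 {r u a b : V} {C : G.Walk r r} (hC : C.IsCycle)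
    (hu : u ∈ C.support) {P : G.Walk a b} (hP : P.IsPath)
    (hPd : ∀ x ∈ P.support, x ∉ C.support)
    (hua : G.Adj u a) (hbu : G.Adj b (csucc C hu)) :
    ∃ (s : V) (N : G.Walk s s), N.IsCycle ∧ C.length < N.length := by
  obtain ⟨Q, hQp, hQl, hQmem, hQd, hQe⟩ := tail_rotate_spec hC hu
  refine ⟨u, Walk.cons hua (P.append (Walk.cons hbu Q)), ?_, ?_⟩
  · rw [Walk.cons_isCycle_iff]
    constructor
    · rw [Walk.isPath_def, Walk.support_append, Walk.support_cons, List.tail_cons,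
        List.nodup_append]
      exact ⟨hP.support_nodup, hQp.support_nodup,
        fun x hx y hy hxy => hPd x hx ((hQmem x).mp (hxy ▸ hy))⟩
    · intro hmem
      rw [Walk.edges_append, List.mem_append, Walk.edges_cons, List.mem_cons] at hmem
      rcases hmem with hm | hm | hm
      · exact hPd u (Walk.fst_mem_support_of_mem_edges P hm) hu
      · rw [Sym2.eq_iff] at hm
        rcases hm with ⟨h1, h2⟩ | ⟨h1, h2⟩
        · exact hPd b (Walk.end_mem_support P) (h1 ▸ hu)
        · exact (adj_csucc hC.not_nil hu).ne h1
      · exact hPd a (Walk.start_mem_support P)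
          ((hQmem a).mp (Walk.snd_mem_support_of_mem_edges Q hm))
  · rw [Walk.length_cons, Walk.length_append, Walk.length_cons]
    omega

end surgery1
section surgery2
variable [DecidableEq V]

/-- Surgery 2: if `u ≠ w` lie on cycle `C`, their successors are distinct from the
other vertex and adjacent to each other, and there is a path `P` from `a` to `b`
disjoint from `C` with `u ~ a` and `w ~ b`, then there is a longer cycle. -/
lemma surgery2 {r u w a b : V} {C : G.Walk r r} (hC : C.IsCycle)
    (hu : u ∈ C.support) (hw : w ∈ C.support) (huw : u ≠ w)
    (hwu' : w ≠ csucc C hu) (huw' : u ≠ csucc C hw)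
    (hadj : G.Adj (csucc C hu) (csucc C hw))
    {P : G.Walk a b} (hP : P.IsPath)
    (hPd : ∀ x ∈ P.support, x ∉ C.support)
    (hua : G.Adj u a) (hwb : G.Adj w b) :
    ∃ (s : V) (N : G.Walk s s), N.IsCycle ∧ C.length < N.length := by
  set u' := csucc C hu with hu'def
  set w' := csucc C hw with hw'def
  obtain ⟨Q, hQp, hQl, hQmem, hQd, hQe⟩ := tail_rotate_spec hC hu
  have hwQ : w ∈ Q.support := (hQmem w).mpr hw
  have hu'C : u' ∈ C.support := csucc_mem_support hC.not_nil hu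
  have hw'C : w' ∈ C.support := csucc_mem_support hC.not_nil hw
  -- split Q at w
  set Q1 : G.Walk u' w := Q.takeUntil w hwQ with hQ1def
  set Q2 : G.Walk w u := Q.dropUntil w hwQ with hQ2def
  have hQspec : Q1.append Q2 = Q := Q.take_spec hwQ
  have hQ1p : Q1.IsPath := hQp.takeUntil hwQ
  have hQ2p : Q2.IsPath := hQp.dropUntil hwQ
  have hQ2n : ¬Q2.Nil := Walk.not_nil_of_ne (Ne.symm huw)
  -- the first vertex of Q2 after w is w'
  have hQ2fd : Q2.firstDart hQ2n ∈ C.darts :=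
    hQd _ ((Walk.darts_dropUntil_subset Q hwQ) (firstDart_mem_darts Q2 hQ2n))
  have hgv : Q2.getVert 1 = w' := by
    have := dart_snd_eq_csucc hC hQ2fd
    exact this
  -- R' : the rest of Q2 after w, recast to start at w'
  set R' : G.Walk w' u := (Q2.tail).copy hgv rfl with hR'def
  have hR'p : R'.IsPath := by
    rw [hR'def, Walk.isPath_copy]
    exact Walk.IsPath.mk' (by
      rw [Walk.support_tail_of_not_nil _ hQ2n]
      exact hQ2p.support_nodup.sublist (List.tail_sublist _))
  have hR'sup : R'.support = Q2.support.tail := by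
    rw [hR'def, Walk.support_copy, Walk.support_tail_of_not_nil _ hQ2n]
  have hR'edges : ∀ e ∈ R'.edges, e ∈ C.edges := by
    intro e he
    rw [hR'def, Walk.edges_copy] at he
    have h1 : e ∈ Q2.edges := by
      have := Walk.cons_tail_eq Q2 hQ2n
      rw [← this, Walk.edges_cons]
      exact List.mem_cons_of_mem _ he
    exact hQe _ ((Walk.edges_dropUntil_subset Q hwQ) h1)
  have hR'len : R'.length + 1 = Q2.length := by
    rw [hR'def, Walk.length_copy, Walk.length_tail_add_one hQ2n]
  set R : G.Walk u w' := R'.reverse with hRdef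
  -- disjointness of Q1 and Q2.tail supports
  have hQsupp : Q.support = Q1.support ++ Q2.support.tail := by
    rw [← hQspec, Walk.support_append]
  have hQdisj : ∀ x ∈ Q1.support, x ∉ Q2.support.tail := by
    have := hQp.support_nodup
    rw [hQsupp, List.nodup_append] at this
    exact fun x hx hx2 => this.2.2 x hx x hx2 rfl
  -- assemble the new closed walk
  set M : G.Walk u' w' :=
    Q1.append (Walk.cons hwb (P.reverse.append (Walk.cons hua.symm R))) with hMdef
  refine ⟨w', Walk.cons hadj.symm M, ?_, ?_⟩
  · rw [Walk.cons_isCycle_iff]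
    have hMsup : M.support = Q1.support ++ (P.reverse.support ++ R.support) := by
      rw [hMdef, Walk.support_append, Walk.support_cons, List.tail_cons,
        Walk.support_append, Walk.support_cons, List.tail_cons]
    constructor
    · rw [Walk.isPath_def, hMsup, List.nodup_append]
      refine ⟨hQ1p.support_nodup, ?_, ?_⟩
      · rw [List.nodup_append]
        refine ⟨hP.reverse.support_nodup, ?_, ?_⟩
        · rw [hRdef, Walk.support_reverse]
          exact List.nodup_reverse.mpr hR'p.support_nodup
        · intro x hx y hx2 hxy
          subst hxy
          rw [Walk.support_reverse, List.mem_reverse] at hx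
          rw [hRdef, Walk.support_reverse, List.mem_reverse, hR'sup] at hx2
          exact hPd x hx ((hQmem x).mp
            ((Walk.support_dropUntil_subset Q hwQ) (List.mem_of_mem_tail hx2)))
      · intro x hx y hx2 hxy
        subst hxy
        rcases List.mem_append.mp hx2 with h2 | h2
        · rw [Walk.support_reverse, List.mem_reverse] at h2
          exact hPd x h2 ((hQmem x).mp ((Walk.support_takeUntil_subset Q hwQ) hx))
        · rw [hRdef, Walk.support_reverse, List.mem_reverse, hR'sup] at h2
          exact hQdisj x hx h2
    · intro hmem
      rw [hMdef, Walk.edges_append, List.mem_append, Walk.edges_cons, List.mem_cons,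
        Walk.edges_append, List.mem_append, Walk.edges_cons, List.mem_cons] at hmem
      have hCedge : s(w', u') ∉ C.edges := by
        intro hce
        obtain ⟨hx, hy, hcase⟩ := edge_mem_cycle_iff hC hce
        rcases hcase with hcase | hcase
        · -- u' = csucc C (w' mem)
          exact huw' (csucc_injective hC hu hx (hu'def ▸ hcase) ▸ rfl)
        · exact hwu' (csucc_injective hC hw hy (hw'def ▸ hcase) ▸ rfl)
      rcases hmem with hm | hm | hm | hm | hm
      · exact hCedge (hQe _ ((Walk.edges_takeUntil_subset Q hwQ) hm))
      · rw [Sym2.eq_iff] at hm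
        rcases hm with ⟨h1, h2⟩ | ⟨h1, h2⟩
        · exact hPd b (Walk.end_mem_support P) (h2 ▸ hu'C)
        · exact hPd b (Walk.end_mem_support P) (h1 ▸ hw'C)
      · have : w' ∈ P.reverse.support := Walk.fst_mem_support_of_mem_edges _ hm
        rw [Walk.support_reverse, List.mem_reverse] at this
        exact hPd w' this hw'C
      · rw [Sym2.eq_iff] at hm
        rcases hm with ⟨h1, h2⟩ | ⟨h1, h2⟩
        · exact hPd a (Walk.start_mem_support P) (h1 ▸ hw'C)
        · exact hPd a (Walk.start_mem_support P) (h2 ▸ hu'C)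
      · have : s(w', u') ∈ R'.edges := by
          rwa [hRdef, Walk.edges_reverse, List.mem_reverse] at hm
        exact hCedge (hR'edges _ this)
  · have hlM : (Walk.cons hadj.symm M).length = M.length + 1 := Walk.length_cons _ _
    have hQlen : Q1.length + Q2.length = Q.length := by
      rw [← hQspec, Walk.length_append]
    have hMlen : M.length = Q1.length + (P.reverse.length + (R.length + 1) + 1) := by
      rw [hMdef, Walk.length_append, Walk.length_cons, Walk.length_append, Walk.length_cons]
    have hRlen : R.length = R'.length := Walk.length_reverse _
    rw [hlM, hMlen]
    omega

end surgery2
section outer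
variable [Fintype V]

lemma le_indepNum' {s : Finset V} (hs : G.IsIndepSet' ↑s) : s.card ≤ G.indepNum' :=
  le_csSup ⟨Fintype.card V, fun n ⟨t, _, hc⟩ => hc ▸ Finset.card_le_univ t⟩ ⟨s, hs, rfl⟩

lemma isKConnected_connectivity' (h0 : 0 < Fintype.card V) :
    G.IsKConnected G.connectivity' :=
  by
  have h1 : (0 : ℕ) ∈ {k | G.IsKConnected k} := ⟨h0, fun s hs => absurd hs (by omega)⟩
  have h2 : BddAbove {k | G.IsKConnected k} := ⟨Fintype.card V, fun k hk => le_of_lt hk.1⟩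
  exact Nat.sSup_mem ⟨0, h1⟩ h2

lemma isKConnected_mono {j k : ℕ} (hjk : j ≤ k) (h : G.IsKConnected k) :
    G.IsKConnected j :=
  ⟨lt_of_le_of_lt hjk h.1, fun s hs => h.2 s (lt_of_lt_of_le hs hjk)⟩

lemma one_le_indepNum' [Nonempty V] : 1 ≤ G.indepNum' := by
  obtain ⟨x⟩ := ‹Nonempty V›
  have : G.IsIndepSet' ↑({x} : Finset V) := by
    simp [SimpleGraph.IsIndepSet', Set.pairwise_singleton]
  simpa using le_indepNum' this

lemma connected_of_one_le (h1 : 1 ≤ G.connectivity') (h0 : 0 < Fintype.card V) :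
    G.Connected := by
  have hK := isKConnected_connectivity' (G := G) h0
  have := hK.2 ∅ (by rw [Set.ncard_empty]; omega)
  rw [show ((∅ : Set V)ᶜ) = Set.univ from Set.compl_empty] at this
  exact (induceUnivIso G).connected_iff.mp this

lemma two_le_degree_of_two_connected (h3 : 3 ≤ Fintype.card V) (h2 : G.IsKConnected 2)
    (v : V) [Fintype (G.neighborSet v)] : 2 ≤ G.degree v := by
  classical
  by_contra hdeg
  push_neg at hdeg
  have hncard : (G.neighborSet v).ncard = G.degree v := by
    rw [Set.ncard_eq_toFinset_card', Set.toFinset_card, card_neighborSet_eq_degree]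
  have hconn := h2.2 (G.neighborSet v) (by omega)
  -- find a vertex outside the closed neighborhood of v
  have hex : ∃ y, y ∉ insert v (G.neighborSet v) := by
    by_contra hall
    push_neg at hall
    have huniv : insert v (G.neighborSet v) = Set.univ := Set.eq_univ_of_forall hall
    have h1 : (insert v (G.neighborSet v)).ncard ≤ (G.neighborSet v).ncard + 1 :=
      Set.ncard_insert_le _ _
    rw [huniv, Set.ncard_univ, Nat.card_eq_fintype_card] at h1
    omega
  obtain ⟨y, hy⟩ := hex
  rw [Set.mem_insert_iff] at hy
  push_neg at hy
  have hvmem : v ∈ (G.neighborSet v)ᶜ := by simp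
  have hymem : y ∈ (G.neighborSet v)ᶜ := hy.2
  obtain ⟨W⟩ := hconn.preconnected ⟨v, hvmem⟩ ⟨y, hymem⟩
  have hne : (⟨v, hvmem⟩ : ↥((G.neighborSet v)ᶜ)) ≠ ⟨y, hymem⟩ :=
    fun hh => hy.1 (congrArg Subtype.val hh).symm
  have hnn : ¬W.Nil := Walk.not_nil_of_ne hne
  have hadj := W.adj_snd hnn
  exact (W.getVert 1).2 hadj

/-- A triangle is a cycle. -/
lemma triangle_isCycle {x y z : V} (hxy : G.Adj x y) (hyz : G.Adj y z) (hzx : G.Adj z x) :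
    (Walk.cons hxy (Walk.cons hyz (Walk.cons hzx Walk.nil))).IsCycle := by
  have hxz : x ≠ z := hzx.ne'
  have hxy' : x ≠ y := hxy.ne
  have hyz' : y ≠ z := hyz.ne
  rw [Walk.isCycle_def]
  refine ⟨⟨?_⟩, by simp, ?_⟩
  · simp [Sym2.eq_iff]
    tauto
  · simp [hxz, hxy', hyz']
    tauto

lemma exists_cycle_main (h3 : 3 ≤ Fintype.card V) (hα : G.indepNum' ≤ G.connectivity') :
    ∃ (x : V) (c : G.Walk x x), c.IsCycle := by
  classical
  by_cases hcomp : ∀ x y : V, x ≠ y → G.Adj x y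
  · obtain ⟨x, y, z, hxy, hxz, hyz⟩ := Fintype.two_lt_card_iff.mp (by omega : 2 < Fintype.card V)
    exact ⟨x, _, triangle_isCycle (hcomp x y hxy) (hcomp y z hyz) (hcomp z x hxz.symm)⟩
  · push_neg at hcomp
    obtain ⟨x, y, hne, hnadj⟩ := hcomp
    have hind : G.IsIndepSet' ↑({x, y} : Finset V) := by
      intro p hp q hq hpq
      simp only [Finset.coe_insert, Finset.coe_singleton, Set.mem_insert_iff,
        Set.mem_singleton_iff] at hp hq
      rcases hp with rfl | rfl <;> rcases hq with rfl | rfl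
      · exact absurd rfl hpq
      · exact hnadj
      · exact fun hadj => hnadj hadj.symm
      · exact absurd rfl hpq
    have h2 : 2 ≤ G.indepNum' := by
      have := le_indepNum' hind
      rwa [Finset.card_insert_of_notMem (by simpa using hne), Finset.card_singleton] at this
    have hK2 : G.IsKConnected 2 := isKConnected_mono (le_trans h2 hα)
      (isKConnected_connectivity' (by omega))
    -- G is connected with min degree 2, hence not acyclic
    by_contra hnocycle
    push_neg at hnocycle
    have hac : G.IsAcyclic := fun v c hc => hnocycle v c hc
    have hconn : G.Connected := connected_of_one_le
      (le_trans (by omega : (1:ℕ) ≤ 2) (le_trans h2 hα)) (by omega)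
    have htree : G.IsTree := ⟨hconn, hac⟩
    have hedges := htree.card_edgeFinset
    have hsum := G.sum_degrees_eq_twice_card_edges
    have hge : ∀ v : V, 2 ≤ G.degree v := fun v =>
      two_le_degree_of_two_connected h3 hK2 v
    have : 2 * Fintype.card V ≤ ∑ v : V, G.degree v := by
      calc 2 * Fintype.card V = ∑ _v : V, 2 := by
            rw [Finset.sum_const, Finset.card_univ, smul_eq_mul, mul_comm]
        _ ≤ ∑ v : V, G.degree v := Finset.sum_le_sum fun v _ => hge v
    omega

end outer
section maxcycle
variable [Fintype V] [DecidableEq V]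

lemma exists_max_cycle (hex : ∃ (x : V) (c : G.Walk x x), c.IsCycle) :
    ∃ (x : V) (C : G.Walk x x), C.IsCycle ∧
      ∀ (y : V) (D : G.Walk y y), D.IsCycle → D.length ≤ C.length := by
  classical
  set Lset : Set ℕ := {n | ∃ (x : V) (c : G.Walk x x), c.IsCycle ∧ c.length = n} with hLdef
  have hbdd : BddAbove Lset := by
    refine ⟨Fintype.card V, ?_⟩
    rintro n ⟨x, c, hc, rfl⟩
    have h2 := Walk.length_support c
    have h3 : c.support.tail.length = c.support.length - 1 := List.length_tail
    have h4 : c.support.tail.length ≤ Fintype.card V := hc.support_nodup.length_le_card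
    omega
  have hne : Lset.Nonempty := by
    obtain ⟨x, c, hc⟩ := hex
    exact ⟨c.length, x, c, hc, rfl⟩
  obtain ⟨x, C, hC, hlen⟩ := Nat.sSup_mem hne hbdd
  exact ⟨x, C, hC, fun y D hD => hlen ▸ le_csSup hbdd ⟨y, D, hD, rfl⟩⟩

lemma isHamiltonianCycle_of_all_mem {r : V} {C : G.Walk r r} (hC : C.IsCycle)
    (hall : ∀ x, x ∈ C.support) : C.IsHamiltonianCycle := by
  refine ⟨hC, fun x => ?_⟩
  rw [Walk.support_tail_of_not_nil C hC.not_nil]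
  exact List.count_eq_one_of_mem hC.support_nodup
    ((closed_mem_support_iff_mem_tail C hC.not_nil).mp (hall x))

end maxcycle
end CE

open CE in
/-- The Chvátal–Erdős theorem: a graph on at least three vertices with `α(G) ≤ κ(G)`
is Hamiltonian. -/
theorem stmt_3 {V : Type*} [Fintype V] [DecidableEq V] (G : SimpleGraph V)
    (hn : 3 ≤ Fintype.card V)
    (h : G.indepNum' ≤ G.connectivity') :
    G.IsHamiltonian := by
  classical
  intro hcard1
  by_contra hno
  push_neg at hno
  haveI hNE : Nonempty V := Fintype.card_pos_iff.mp (by omega)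
  have hα1 : 1 ≤ G.indepNum' := CE.one_le_indepNum'
  have hκ1 : 1 ≤ G.connectivity' := le_trans hα1 h
  have hK : G.IsKConnected G.connectivity' := CE.isKConnected_connectivity' (by omega)
  have hconn : G.Connected := CE.connected_of_one_le hκ1 (by omega)
  obtain ⟨r, C, hC, hmax⟩ := CE.exists_max_cycle (CE.exists_cycle_main hn h)
  -- a vertex not on the longest cycle
  have hvex : ∃ v, v ∉ C.support := by
    by_contra hall
    push_neg at hall
    exact hno r C (CE.isHamiltonianCycle_of_all_mem hC hall)
  obtain ⟨v, hv⟩ := hvex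
  -- the set of vertices reachable from v avoiding C
  set Hs : Set V := {x | ∃ q : G.Walk v x, ∀ y ∈ q.support, y ∉ C.support} with hHdef
  have hvH : v ∈ Hs := ⟨Walk.nil, by simpa using hv⟩
  have hHC : ∀ x ∈ Hs, x ∉ C.support := fun x ⟨q, hq⟩ => hq x (Walk.end_mem_support q)
  have hHadj : ∀ x ∈ Hs, ∀ z, G.Adj x z → z ∉ C.support → z ∈ Hs := by
    rintro x ⟨q, hq⟩ z hadj hz
    refine ⟨q.append (Walk.cons hadj Walk.nil), ?_⟩
    intro y hy
    rw [Walk.mem_support_append_iff] at hy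
    rcases hy with hy | hy
    · exact hq y hy
    · have hy2 : y = x ∨ y = z := by simpa using hy
      rcases hy2 with rfl | rfl
      · exact hq y (Walk.end_mem_support q)
      · exact hz
  have hHpath : ∀ a ∈ Hs, ∀ b ∈ Hs,
      ∃ P : G.Walk a b, P.IsPath ∧ ∀ y ∈ P.support, y ∉ C.support := by
    rintro a ⟨qa, hqa⟩ b ⟨qb, hqb⟩
    refine ⟨(qa.reverse.append qb).bypass, Walk.bypass_isPath _, ?_⟩
    intro y hy
    have hy2 := Walk.support_bypass_subset _ hy
    rw [Walk.mem_support_append_iff] at hy2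
    rcases hy2 with h1 | h1
    · rw [Walk.support_reverse, List.mem_reverse] at h1
      exact hqa y h1
    · exact hqb y h1
  -- the attachment set S
  set Ss : Set V := {x | x ∈ C.support ∧ ∃ y ∈ Hs, G.Adj y x} with hSdef
  have hSsub : ∀ x ∈ Ss, x ∈ C.support := fun x hx => hx.1
  have hSnotsucc : ∀ (x) (hx : x ∈ C.support), x ∈ Ss → CE.csucc C hx ∉ Ss := by
    rintro x hx ⟨hxC, y, hyH, hyx⟩ ⟨hx'C, z, hzH, hzx⟩
    obtain ⟨P, hPp, hPd⟩ := hHpath y hyH z hzH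
    obtain ⟨s, N, hN, hlen⟩ := CE.surgery1 hC hx hPp hPd hyx.symm hzx
    exact absurd (hmax s N hN) (by omega)
  have hSne : Ss.Nonempty := by
    have reach : ∀ (x y : V) (q : G.Walk x y), x ∈ Hs → y ∈ C.support → Ss.Nonempty := by
      intro x y q
      induction q with
      | nil => exact fun hxH hyC => absurd hyC (hHC _ hxH)
      | @cons a z c hadj q ih =>
        intro hxH hyC
        by_cases hzC : z ∈ C.support
        · exact ⟨z, hzC, a, hxH, hadj⟩
        · exact ih (hHadj _ hxH _ hadj hzC) hyC
    obtain ⟨q⟩ := hconn.preconnected v r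
    exact reach v r q hvH (Walk.start_mem_support C)
  -- removing S disconnects v from the rest of the cycle
  have hdisc : ¬(G.induce Ssᶜ).Connected := by
    obtain ⟨x₀, hx₀⟩ := hSne
    have hx₀C : x₀ ∈ C.support := hSsub _ hx₀
    have htC : CE.csucc C hx₀C ∈ C.support := CE.csucc_mem_support hC.not_nil hx₀C
    have htS : CE.csucc C hx₀C ∉ Ss := hSnotsucc x₀ hx₀C hx₀
    have hvS : v ∉ Ss := fun hmem => hv (hSsub _ hmem)
    intro hcon
    obtain ⟨W⟩ := hcon.preconnected ⟨v, hvS⟩ ⟨CE.csucc C hx₀C, htS⟩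
    have stay : ∀ (x y : ↥(Ssᶜ)) (W : (G.induce Ssᶜ).Walk x y),
        x.1 ∈ Hs → y.1 ∈ C.support → False := by
      intro x y W
      induction W with
      | nil => exact fun hxH hyC => hHC _ hxH hyC
      | @cons a z c hadj q ih =>
        intro hxH hyC
        have hGadj : G.Adj a.1 z.1 := hadj
        by_cases hzC : z.1 ∈ C.support
        · exact z.2 ⟨hzC, a.1, hxH, hGadj⟩
        · exact ih (hHadj _ hxH _ hGadj hzC) hyC
    exact stay _ _ W hvH htC
  have hScard : G.connectivity' ≤ Ss.ncard := by
    by_contra hlt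
    push_neg at hlt
    exact hdisc (hK.2 Ss hlt)
  -- the independent set {v} ∪ succ(S)
  set σ : V → V := fun x => if hx : x ∈ C.support then CE.csucc C hx else x with hσdef
  have hσS : ∀ (x) (hx : x ∈ C.support), σ x = CE.csucc C hx := by
    intro x hx
    simp only [hσdef]
    exact dif_pos hx
  set T : Finset V := Ss.toFinset with hTdef
  have hTmem : ∀ x, x ∈ T ↔ x ∈ Ss := fun x => Set.mem_toFinset
  have hTcard : T.card = Ss.ncard := (Set.ncard_eq_toFinset_card' Ss).symm
  have hvT : v ∉ T.image σ := by
    intro hmem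
    rw [Finset.mem_image] at hmem
    obtain ⟨x, hxT, hσx⟩ := hmem
    have hxC := hSsub _ ((hTmem x).mp hxT)
    rw [hσS x hxC] at hσx
    exact hv (hσx ▸ CE.csucc_mem_support hC.not_nil hxC)
  have hinj : Set.InjOn σ ↑T := by
    intro x hx y hy hxy
    have hxC := hSsub _ ((hTmem x).mp (Finset.mem_coe.mp hx))
    have hyC := hSsub _ ((hTmem y).mp (Finset.mem_coe.mp hy))
    rw [hσS x hxC, hσS y hyC] at hxy
    exact CE.csucc_injective hC hxC hyC hxy
  have hcard2 : (insert v (T.image σ)).card = Ss.ncard + 1 := by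
    rw [Finset.card_insert_of_notMem hvT, Finset.card_image_of_injOn hinj, hTcard]
  -- non-adjacency facts
  have hnadj_v : ∀ x ∈ Ss, ¬G.Adj v (σ x) := by
    intro x hx hadj
    have hxC := hSsub _ hx
    rw [hσS x hxC] at hadj
    exact hSnotsucc x hxC hx ⟨CE.csucc_mem_support hC.not_nil hxC, v, hvH, hadj⟩
  have hnadj_σ : ∀ x ∈ Ss, ∀ y ∈ Ss, x ≠ y → ¬G.Adj (σ x) (σ y) := by
    intro x hx y hy hxy hadj
    have hxC := hSsub _ hx
    have hyC := hSsub _ hy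
    rw [hσS x hxC, hσS y hyC] at hadj
    have h1 : y ≠ CE.csucc C hxC := fun heq => hSnotsucc x hxC hx (heq ▸ hy)
    have h2 : x ≠ CE.csucc C hyC := fun heq => hSnotsucc y hyC hy (heq ▸ hx)
    obtain ⟨_, a, haH, hax⟩ := hx
    obtain ⟨_, b, hbH, hby⟩ := hy
    obtain ⟨P, hPp, hPd⟩ := hHpath a haH b hbH
    obtain ⟨s, N, hN, hlen⟩ :=
      CE.surgery2 hC hxC hyC hxy h1 h2 hadj hPp hPd hax.symm hby.symm
    exact absurd (hmax s N hN) (by omega)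
  -- independence
  have hindep : G.IsIndepSet' ↑(insert v (T.image σ)) := by
    intro p hp q hq hpq
    simp only [Finset.coe_insert, Set.mem_insert_iff, Finset.mem_coe,
      Finset.mem_image] at hp hq
    rcases hp with rfl | hp
    · rcases hq with rfl | hq
      · exact absurd rfl hpq
      · obtain ⟨x, hxT, rfl⟩ := hq
        exact hnadj_v x ((hTmem x).mp hxT)
    · obtain ⟨x, hxT, rfl⟩ := hp
      rcases hq with rfl | hq
      · exact fun hadj => hnadj_v x ((hTmem x).mp hxT) hadj.symm
      · obtain ⟨y, hyT, rfl⟩ := hq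
        have hxy : x ≠ y := fun heq => hpq (heq ▸ rfl)
        exact hnadj_σ x ((hTmem x).mp hxT) y ((hTmem y).mp hyT) hxy
  have hfinal : Ss.ncard + 1 ≤ G.indepNum' := hcard2 ▸ CE.le_indepNum' hindep
  omega
end

section
/- Fix integers k ≥ 1 and κ, m, n with k ≤ κ < m and 2m+1 ≤ n ≤ 3m−κ. Let G₁ = K_{n−2m} + \overline{K}_κ + \overline{K}_m + \overline{K}_{m−κ}, the sequential join of a complete graph on n−2m vertices, an edgeless graph on κ vertices, an edgeless graph on m vertices, and an edgeless graph on m−κ vertices. Then G₁ is not Hamiltonian. -/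
open SimpleGraph

/-- A "blowup" graph: vertices are grouped in parts indexed by `ι`, where part `i` has
`sizes i` vertices, part `i` induces a complete graph if `compl i` holds (an edgeless graph
otherwise), and two parts `i`, `j` are completely joined iff `rel i j ∨ rel j i`. -/
def blowup {ι : Type} (sizes : ι → ℕ) (compl : ι → Prop) (rel : ι → ι → Prop) :
    SimpleGraph (Σ i, Fin (sizes i)) where
  Adj x y := (x.1 = y.1 ∧ compl x.1 ∧ x ≠ y) ∨ (x.1 ≠ y.1 ∧ (rel x.1 y.1 ∨ rel y.1 x.1))
  symm := by
    refine ⟨?_⟩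
    rintro x y (⟨h1, h2, h3⟩ | ⟨h1, h2⟩)
    · exact Or.inl ⟨h1.symm, h1 ▸ h2, h3.symm⟩
    · exact Or.inr ⟨h1.symm, h2.symm⟩
  loopless := ⟨by rintro x (⟨_, _, h⟩ | ⟨h, _⟩) <;> exact h rfl⟩

/-- The graph `G₁ = K_{n-2m} + K̄_κ + K̄_m + K̄_{m-κ}` (sequential join). -/
def GraphG1 (n m κ : ℕ) : SimpleGraph (Σ i : Fin 4, Fin (![n - 2 * m, κ, m, m - κ] i)) :=
  blowup ![n - 2 * m, κ, m, m - κ] (fun i => i = 0) (fun i j => (i : ℕ) + 1 = (j : ℕ))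

lemma walk_support_getElem {V : Type*} {G : SimpleGraph V} {u v : V} (p : G.Walk u v)
    (i : ℕ) (hi : i < p.support.length) : p.support[i] = p.getVert i := by
  induction p generalizing i with
  | nil => simp at hi; subst hi; simp
  | cons h q ih =>
    cases i with
    | zero => simp
    | succ k =>
      simp only [SimpleGraph.Walk.support_cons] at hi ⊢
      simp only [List.getElem_cons_succ]
      rw [ih k (by simpa using hi)]
      rfl

lemma exists_cyclic_enum {α : Type*} [DecidableEq α] [Fintype α] {G : SimpleGraph α}
    (h : G.IsHamiltonian) (h2 : 2 ≤ Fintype.card α) :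
    ∃ c : ZMod (Fintype.card α) → α, Function.Bijective c ∧ ∀ i, G.Adj (c i) (c (i + 1)) := by
  set N := Fintype.card α with hN
  have hNz : NeZero N := ⟨by omega⟩
  obtain ⟨a, p, hp⟩ := h (by omega)
  have hlen : p.length = N := hp.length_eq
  have hsl : p.support.length = N + 1 := by
    rw [SimpleGraph.Walk.length_support, hlen]
  refine ⟨fun i => p.getVert (i.val + 1), ⟨?_, ?_⟩, ?_⟩
  · -- injective
    intro i j hij
    have hnd : p.support.tail.Nodup := hp.isCycle.2
    have hi1 : i.val + 1 < p.support.length := by rw [hsl]; have := i.val_lt; omega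
    have hj1 : j.val + 1 < p.support.length := by rw [hsl]; have := j.val_lt; omega
    have htl : ∀ k (hk : k < p.support.tail.length), p.support.tail[k] = p.getVert (k+1) := by
      intro k hk
      rw [List.getElem_tail, walk_support_getElem]
    have hlt : p.support.tail.length = N := by simp [List.length_tail, hsl]
    have hiv : i.val < p.support.tail.length := by rw [hlt]; exact i.val_lt
    have hjv : j.val < p.support.tail.length := by rw [hlt]; exact j.val_lt
    have : p.support.tail[i.val] = p.support.tail[j.val] := by
      rw [htl _ hiv, htl _ hjv]; exact hij
    have := (List.Nodup.getElem_inj_iff hnd).mp this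
    exact ZMod.val_injective N this
  · -- surjective
    intro u
    have hu : u ∈ p.support := hp.mem_support u
    rw [SimpleGraph.Walk.mem_support_iff_exists_getVert] at hu
    obtain ⟨n, hn, hnle⟩ := hu
    rcases Nat.eq_zero_or_pos n with rfl | hpos
    · refine ⟨(N - 1 : ℕ), ?_⟩
      dsimp only
      have hval : ((N - 1 : ℕ) : ZMod N).val = N - 1 := by
        rw [ZMod.val_natCast, Nat.mod_eq_of_lt (by omega)]
      rw [hval]
      have : N - 1 + 1 = N := by omega
      rw [this, ← hlen, SimpleGraph.Walk.getVert_length]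
      rw [SimpleGraph.Walk.getVert_zero] at hn
      exact hn
    · obtain ⟨k, rfl⟩ := Nat.exists_eq_add_of_lt hpos
      refine ⟨(k : ℕ), ?_⟩
      dsimp only
      have hval : ((k : ℕ) : ZMod N).val = k := by
        rw [ZMod.val_natCast, Nat.mod_eq_of_lt (by omega)]
      rw [hval]
      rw [← hn]; congr 1; omega
  · -- adjacency
    intro i
    dsimp only
    have hiv := i.val_lt
    have hadd : (i + 1).val = (i.val + 1) % N := by
      rw [ZMod.val_add, ZMod.val_one_eq_one_mod, Nat.mod_eq_of_lt (show 1 < N by omega)]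
    rcases Nat.lt_or_ge (i.val + 1) N with hlt | hge
    · rw [hadd, Nat.mod_eq_of_lt hlt]
      exact p.adj_getVert_succ (by rw [hlen]; omega)
    · have hNeq : i.val + 1 = N := by omega
      rw [hadd, hNeq, Nat.mod_self, ← hlen, SimpleGraph.Walk.getVert_length]
      have := p.adj_getVert_succ (i := 0) (by rw [hlen]; omega)
      rw [SimpleGraph.Walk.getVert_zero] at this
      simpa using this


/-- The graph `G₁ = K_{n-2m} + K̄_κ + K̄_m + K̄_{m-κ}` (with `k ≤ κ < m` and
`2m+1 ≤ n ≤ 3m-κ`) is not Hamiltonian. -/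
theorem stmt_8 (k κ m n : ℕ) (hk : 1 ≤ k) (hkκ : k ≤ κ) (hκm : κ < m)
    (hn1 : 2 * m + 1 ≤ n) (hn2 : n ≤ 3 * m - κ) :
    ¬ (GraphG1 n m κ).IsHamiltonian := by
  classical
  intro hHam
  have hNcard : Fintype.card (Σ i : Fin 4, Fin (![n - 2 * m, κ, m, m - κ] i)) =
      n - 2 * m + κ + m + (m - κ) := by
    rw [Fintype.card_sigma, Fin.sum_univ_four]
    simp only [Fintype.card_fin]
    simp
  have h2N : 2 ≤ Fintype.card (Σ i : Fin 4, Fin (![n - 2 * m, κ, m, m - κ] i)) := by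
    rw [hNcard]; omega
  haveI : NeZero (Fintype.card (Σ i : Fin 4, Fin (![n - 2 * m, κ, m, m - κ] i))) := ⟨by omega⟩
  obtain ⟨c, ⟨cinj, csurj⟩, hadj⟩ := exists_cyclic_enum hHam h2N
  have hadj' : ∀ i, ((c i).1 = (c (i+1)).1 ∧ (c i).1 = 0 ∧ c i ≠ c (i+1)) ∨
      ((c i).1 ≠ (c (i+1)).1 ∧ (((c i).1 : ℕ) + 1 = ((c (i+1)).1 : ℕ) ∨
        ((c (i+1)).1 : ℕ) + 1 = ((c i).1 : ℕ))) := fun i => hadj i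
  set A : Fin 4 → Finset (ZMod (Fintype.card (Σ i : Fin 4, Fin (![n - 2 * m, κ, m, m - κ] i)))) :=
    fun j => Finset.univ.filter fun i => (c i).1 = j with hA
  have cardA : ∀ j : Fin 4, (A j).card = ![n - 2 * m, κ, m, m - κ] j := by
    intro j
    have h1 : (A j).card =
        (Finset.univ.filter fun v : Σ i : Fin 4, Fin (![n - 2 * m, κ, m, m - κ] i) =>
          v.1 = j).card := by
      apply Finset.card_bij (fun i _ => c i)
      · intro a ha
        simp only [hA, Finset.mem_filter] at ha ⊢
        exact ⟨Finset.mem_univ _, ha.2⟩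
      · intro a _ b _ hab
        exact cinj hab
      · intro v hv
        obtain ⟨i, rfl⟩ := csurj v
        simp only [Finset.mem_filter] at hv
        exact ⟨i, by simp [hA, hv.2], rfl⟩
    rw [h1]
    have h2 : (Finset.univ.filter fun v : Σ i : Fin 4, Fin (![n - 2 * m, κ, m, m - κ] i) =>
        v.1 = j) = Finset.univ.map ⟨Sigma.mk j, sigma_mk_injective⟩ := by
      ext ⟨i, b⟩
      simp only [Finset.mem_filter, Finset.mem_univ, true_and, Finset.mem_map,
        Function.Embedding.coeFn_mk]
      constructor
      · rintro rfl; exact ⟨b, rfl⟩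
      · rintro ⟨b', h⟩; cases h; rfl
    rw [h2, Finset.card_map, Finset.card_univ, Fintype.card_fin]
  have card0 : (A 0).card = n - 2 * m := cardA 0
  have card1 : (A 1).card = κ := cardA 1
  have card2 : (A 2).card = m := cardA 2
  have card3 : (A 3).card = m - κ := cardA 3
  have hF2 : ∀ i, (c i).1 = 2 → (c (i+1)).1 = 1 ∨ (c (i+1)).1 = 3 := by
    have dec2 : ∀ x y : Fin 4, x = 2 →
        (((x:ℕ)+1 = (y:ℕ)) ∨ ((y:ℕ)+1 = (x:ℕ))) → (y = 1 ∨ y = 3) := by decide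
    intro i h
    rcases hadj' i with ⟨_, hc, _⟩ | ⟨_, hrel⟩
    · rw [h] at hc; exact absurd hc (by decide)
    · exact dec2 _ _ h hrel
  have hF0 : ∀ i, (c i).1 = 0 → (c (i+1)).1 = 0 ∨ (c (i+1)).1 = 1 := by
    have dec0 : ∀ x y : Fin 4, x = 0 →
        (((x:ℕ)+1 = (y:ℕ)) ∨ ((y:ℕ)+1 = (x:ℕ))) → y = 1 := by decide
    intro i h
    rcases hadj' i with ⟨heq, _, _⟩ | ⟨_, hrel⟩
    · exact Or.inl (heq ▸ h)
    · exact Or.inr (dec0 _ _ h hrel)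
  have sinj : Function.Injective
      (fun i : ZMod (Fintype.card (Σ i : Fin 4, Fin (![n - 2 * m, κ, m, m - κ] i))) => i + 1) :=
    add_left_injective 1
  have himg : (A 2).image (fun i => i + 1) ⊆ A 1 ∪ A 3 := by
    intro x hx
    simp only [Finset.mem_image] at hx
    obtain ⟨i, hi, rfl⟩ := hx
    simp only [hA, Finset.mem_filter, Finset.mem_univ, true_and] at hi
    rcases hF2 i hi with h | h
    · exact Finset.mem_union_left _ (by simp [hA, h])
    · exact Finset.mem_union_right _ (by simp [hA, h])
  have hdisj : Disjoint (A 1) (A 3) := by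
    rw [Finset.disjoint_left]
    intro i h1 h3
    simp only [hA, Finset.mem_filter] at h1 h3
    rw [h1.2] at h3
    exact absurd h3.2 (by decide)
  have hcards : ((A 2).image (fun i => i + 1)).card = (A 1 ∪ A 3).card := by
    rw [Finset.card_image_of_injective _ sinj, Finset.card_union_of_disjoint hdisj,
      card1, card2, card3]
    omega
  have heqset : (A 2).image (fun i => i + 1) = A 1 ∪ A 3 :=
    Finset.eq_of_subset_of_card_le himg (le_of_eq hcards.symm)
  have hstep : ∀ i, i ∈ A 0 → i + 1 ∈ A 0 := by
    intro i hi
    simp only [hA, Finset.mem_filter, Finset.mem_univ, true_and] at hi ⊢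
    rcases hF0 i hi with h | h
    · exact h
    · exfalso
      have hmem : i + 1 ∈ A 1 ∪ A 3 :=
        Finset.mem_union_left _ (by simp [hA, h])
      rw [← heqset, Finset.mem_image] at hmem
      obtain ⟨i', hi', heq'⟩ := hmem
      have hii : i' = i := sinj heq'
      subst hii
      simp only [hA, Finset.mem_filter, Finset.mem_univ, true_and] at hi'
      rw [hi] at hi'
      exact absurd hi' (by decide)
  have hA0ne : (A 0).Nonempty := by
    rw [← Finset.card_pos, card0]
    omega
  have hA2ne : (A 2).Nonempty := by
    rw [← Finset.card_pos, card2]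
    omega
  obtain ⟨i0, hi0⟩ := hA0ne
  obtain ⟨i2, hi2⟩ := hA2ne
  have hall : ∀ kk : ℕ, i0 + (kk : ZMod _) ∈ A 0 := by
    intro kk
    induction kk with
    | zero => simpa using hi0
    | succ kk ih =>
      rw [Nat.cast_add, Nat.cast_one, ← add_assoc]
      exact hstep _ ih
  have hrepr : i2 = i0 + (((i2 - i0).val : ℕ) : ZMod _) := by
    rw [ZMod.natCast_zmod_val]; ring
  have hi2' := hall (i2 - i0).val
  rw [← hrepr] at hi2'
  simp only [hA, Finset.mem_filter, Finset.mem_univ, true_and] at hi2 hi2'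
  rw [hi2'] at hi2
  exact absurd hi2 (by decide)
end
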